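/- Let E, D be bicategories, A, B : E ⥤ D pseudofunctors, φ, ψ : A ⟶ B strong natural transformations, and m, n : φ ⟶ ψ modifications. Suppose e₀ and e are objects of E admitting a condensation from e₀ to e. If m.app e₀ = n.app e₀, then m.app e = n.app e. -/

import Mathlib

open CategoryTheory

universe w₁ v₁ u₁ w₂ v₂ u₂ w₃ v₃ u₃

/-- A strong natural transformation `φ : A ⟶ B` between pseudofunctors `A, B : E ⥤ D`
consists of 1-morphisms `φ.app e : A.obj e ⟶ B.obj e` together with invertible naturality
2-morphisms `φ.naturality f : A.map f ≫ φ.app e' ≅ φ.app e ≫ B.map f`. -/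
structure PseudoStrongNatTrans {E : Type u₂} [Bicategory.{w₂, v₂} E]
    {D : Type u₃} [Bicategory.{w₃, v₃} D] (A B : Pseudofunctor E D) where
  app : ∀ e : E, A.obj e ⟶ B.obj e
  naturality : ∀ {e e' : E} (f : e ⟶ e'), A.map f ≫ app e' ≅ app e ≫ B.map f

open Bicategory in
/-- A modification `m : φ ⟶ ψ` between strong natural transformations is a family of
2-morphisms `m.app e : φ.app e ⟶ ψ.app e` compatible with the naturality constraints. -/
structure PseudoModification {E : Type u₂} [Bicategory.{w₂, v₂} E]
    {D : Type u₃} [Bicategory.{w₃, v₃} D] {A B : Pseudofunctor E D}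
    (φ ψ : PseudoStrongNatTrans A B) where
  app : ∀ e : E, φ.app e ⟶ ψ.app e
  naturality : ∀ {e e' : E} (f : e ⟶ e'),
    A.map f ◁ app e' ≫ (ψ.naturality f).hom = (φ.naturality f).hom ≫ app e ▷ B.map f

/-- A condensation from `a` to `b` in a bicategory: 1-morphisms `X : a ⟶ b`, `X' : b ⟶ a`
and 2-morphisms `ε : X' ≫ X ⟶ 𝟙 b`, `δ : 𝟙 b ⟶ X' ≫ X` with `δ ≫ ε = 𝟙 (𝟙 b)`. -/
structure Condensation {B : Type u₁} [Bicategory.{w₁, v₁} B] (a b : B) where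
  X : a ⟶ b
  X' : b ⟶ a
  ε : X' ≫ X ⟶ 𝟙 b
  δ : 𝟙 b ⟶ X' ≫ X
  splitting : δ ≫ ε = 𝟙 (𝟙 b)

/-!
Whiskering on the left by `X : a ⟶ b` is injective on 2-morphisms out of `b` whenever `X` is
part of a condensation, because `δ` and `ε` exhibit `𝟙 b ◁ η` as a retract of
`(X' ≫ X) ◁ η`. A pseudofunctor carries the condensation from `e₀` to `e` to one from
`A.obj e₀` to `A.obj e`, and the modification axiom at `X`, with the naturality 2-morphism of `ψ`
invertible, turns `m.app e₀ = n.app e₀` into `A.map X ◁ m.app e = A.map X ◁ n.app e`.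
-/

open Bicategory

namespace Condensation

variable {B : Type u₁} [Bicategory.{w₁, v₁} B] {a b : B}

lemma eq_leftUnitor_conj_whiskerLeft (c : Condensation a b) {d : B} {p q : b ⟶ d}
    (η : p ⟶ q) :
    η = (λ_ p).inv ≫ c.δ ▷ p ≫ (c.X' ≫ c.X) ◁ η ≫ c.ε ▷ q ≫ (λ_ q).hom := by
  rw [← whisker_exchange_assoc, ← comp_whiskerRight_assoc, c.splitting, id_whiskerRight,
    Category.id_comp, leftUnitor_naturality, Iso.inv_hom_id_assoc]

lemma whiskerLeft_injective (c : Condensation a b) {d : B} {p q : b ⟶ d} :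
    Function.Injective (fun η : p ⟶ q => c.X ◁ η) := by
  intro η θ hX
  have hXX : (c.X' ≫ c.X) ◁ η = (c.X' ≫ c.X) ◁ θ := by
    rw [comp_whiskerLeft, comp_whiskerLeft, show c.X ◁ η = c.X ◁ θ from hX]
  rw [c.eq_leftUnitor_conj_whiskerLeft η, c.eq_leftUnitor_conj_whiskerLeft θ, hXX]

variable {C : Type u₂} [Bicategory.{w₂, v₂} C]

def mapPseudofunctor (F : Pseudofunctor B C) (c : Condensation a b) :
    Condensation (F.obj a) (F.obj b) :=
  .mk (F.map c.X) (F.map c.X')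
    ((F.mapComp c.X' c.X).inv ≫ F.map₂ c.ε ≫ (F.mapId b).hom)
    ((F.mapId b).inv ≫ F.map₂ c.δ ≫ (F.mapComp c.X' c.X).hom) <| by
    simp only [Category.assoc, Iso.hom_inv_id_assoc, ← F.map₂_comp_assoc, c.splitting,
      F.map₂_id, Category.id_comp, Iso.inv_hom_id]

end Condensation

namespace PseudoModification

variable {E : Type u₂} [Bicategory.{w₂, v₂} E] {D : Type u₃} [Bicategory.{w₃, v₃} D]
  {A B : Pseudofunctor E D} {φ ψ : PseudoStrongNatTrans A B}

lemma whiskerLeft_app_eq_of_app_eq (m n : PseudoModification φ ψ) {e₀ e : E} (f : e₀ ⟶ e)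
    (h : m.app e₀ = n.app e₀) : A.map f ◁ m.app e = A.map f ◁ n.app e := by
  rw [← cancel_mono (ψ.naturality f).hom, m.naturality, n.naturality, h]

end PseudoModification

/-- If two modifications agree at an object `e₀` admitting a condensation onto `e`, then
they agree at `e`. -/
theorem modification_app_eq_of_condensation
    {E : Type u₂} [Bicategory.{w₂, v₂} E] {D : Type u₃} [Bicategory.{w₃, v₃} D]
    (A B : Pseudofunctor E D) (φ ψ : PseudoStrongNatTrans A B)
    (m n : PseudoModification φ ψ)
    (e₀ e : E) (cond : Condensation e₀ e)
    (h : m.app e₀ = n.app e₀) : m.app e = n.app e :=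
  (cond.mapPseudofunctor A).whiskerLeft_injective
    (m.whiskerLeft_app_eq_of_app_eq n cond.X h)
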